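/- The subspace A^G·f := {D f : D ∈ A^G} of L is an irreducible A^G-module: it is nonzero and has no A^G-invariant subspace other than 0 and itself. (Intermediate claim in the proof of Theorem 2.2, part 1.) -/

import Mathlib

/-- Conjugation action of a group element on endomorphisms of `L`:
`g · T := ρ(g) ∘ T ∘ ρ(g)⁻¹`. -/
def conjEnd {G L : Type*} [Group G] [AddCommGroup L] [Module ℂ L]
    (ρ : Representation ℂ G L) (g : G) :
    Module.End ℂ L →ₗ[ℂ] Module.End ℂ L where
  toFun T := ρ g ∘ₗ T ∘ₗ ρ g⁻¹
  map_add' T S := by ext v; simp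
  map_smul' c T := by ext v; simp

/-!
A nonzero subspace `p` of `A^G f` contains some `v = D f ≠ 0` with `D ∈ A^G`. As `D` commutes
with `G` and `X` is irreducible, `D` is injective on `X`, which is finite-dimensional by local
finiteness. Countable dimension over the uncountable field `ℂ` forces the commutant of `A` to be
`ℂ` (Dixmier's lemma), so the Jacobson density theorem yields `S ∈ A` with `S ∘ D = id` on `X`.
The operators in `A` vanishing on `D X` form a `G`-stable subspace; projecting `S` onto a
`G`-stable complement of it makes `S` invariant without changing it on `D X`. Then
`f = S v ∈ p`, so `p = A^G f`.
-/

open Polynomial Cardinal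

universe u v

theorem Transcendental.linearIndependent_inv_sub {K D : Type*} [Field K] [DivisionRing D]
    [Algebra K D] {x : D} (hx : Transcendental K x) :
    LinearIndependent K fun a ↦ (x - algebraMap K D a)⁻¹ := by
  classical
  rw [transcendental_iff] at hx
  refine linearIndependent_iff'.2 fun s m hm i hi ↦ ?_
  have hne (a : K) : x - algebraMap K D a ≠ 0 := fun h ↦
    X_sub_C_ne_zero a <| hx (X - C a) (by simp [h])
  -- multiplying the relation by `∏ (x - a)` turns it into a polynomial identity in `x`; the
  -- product is formed in `K[X]`, as `D` need not be commutative
  let p : K[X] := ∑ a ∈ s, m a • ∏ j ∈ s.erase a, (X - C j)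
  have hp : Polynomial.aeval x p = 0 := by
    have h (a) (ha : a ∈ s) : Polynomial.aeval x (∏ j ∈ s, (X - C j)) * (x - algebraMap K D a)⁻¹ =
        Polynomial.aeval x (∏ j ∈ s.erase a, (X - C j)) := by
      rw [← s.prod_erase_mul _ ha, map_mul, map_sub, aeval_X, aeval_C,
        mul_inv_cancel_right₀ (hne a)]
    rw [← mul_zero (Polynomial.aeval x (∏ j ∈ s, (X - C j))), ← hm, Finset.mul_sum]
    simp only [p, map_sum, map_smul, mul_smul_comm]
    exact Finset.sum_congr rfl fun a ha ↦ congrArg _ (h a ha).symm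
  have h0 : ∀ j ∈ s.erase i, m j • ∏ k ∈ s.erase j, (i - k) = 0 := fun j hj ↦
    smul_eq_zero_of_right _ <| Finset.prod_eq_zero
      (Finset.mem_erase_of_ne_of_mem (Finset.ne_of_mem_erase hj).symm hi) (sub_self i)
  have := congr(eval i $(hx p hp))
  simp only [eval_zero, p, eval_finsetSum, eval_smul, eval_prod, eval_sub, eval_X, eval_C] at this
  rw [← s.sum_erase_add _ hi, Finset.sum_eq_zero h0, zero_add] at this
  exact (smul_eq_zero.mp this).resolve_right
    (Finset.prod_ne_zero_iff.2 fun j hj ↦ sub_ne_zero.2 (Finset.ne_of_mem_erase hj).symm)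

theorem IsAlgClosed.algebraMap_bijective_of_rank_lt {K : Type u} {D : Type v} [Field K]
    [IsAlgClosed K] [DivisionRing D] [Algebra K D]
    (h : Cardinal.lift.{u} (Module.rank K D) < Cardinal.lift.{v} #K) :
    Function.Bijective (algebraMap K D) := by
  have : Algebra.IsAlgebraic K D := ⟨fun x ↦ by
    by_contra hx
    exact h.not_ge (Transcendental.linearIndependent_inv_sub hx).cardinal_lift_le_rank⟩
  exact IsAlgClosed.algebraMap_bijective_of_isIntegral

namespace Subalgebra

variable {K : Type u} {L : Type v} [Field K] [AddCommGroup L] [Module K L]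
  (A : Subalgebra K (Module.End K L))

theorem isSimpleModule_of_forall_invariant [Nontrivial L]
    (hA : ∀ p : Submodule K L, (∀ T ∈ A, ∀ x ∈ p, T x ∈ p) → p = ⊥ ∨ p = ⊤) :
    IsSimpleModule A L where
  eq_bot_or_eq_top p := by
    rcases hA (p.restrictScalars K) fun T hT x hx ↦ p.smul_mem ⟨T, hT⟩ hx with h | h
    · exact .inl ((Submodule.restrictScalars_eq_bot_iff K A L).mp h)
    · exact .inr ((Submodule.restrictScalars_eq_top_iff K A L).mp h)

variable [IsSimpleModule A L]

theorem rank_end_le : Module.rank K (Module.End A L) ≤ Module.rank K L := by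
  have := IsSimpleModule.nontrivial A L
  obtain ⟨v, hv⟩ := exists_ne (0 : L)
  let ev : Module.End A L →ₗ[K] L :=
    { toFun d := d v, map_add' _ _ := rfl, map_smul' _ _ := rfl }
  refine ev.rank_le_of_injective fun d₁ d₂ h ↦ sub_eq_zero.mp ?_
  by_contra hd
  exact hv (LinearMap.injective_of_ne_zero hd (by simpa [ev, sub_eq_zero] using h))

theorem algebraMap_end_bijective [IsAlgClosed K]
    (h : Cardinal.lift.{u} (Module.rank K L) < Cardinal.lift.{v} #K) :
    Function.Bijective (algebraMap K (Module.End A L)) := by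
  classical
  exact IsAlgClosed.algebraMap_bijective_of_rank_lt (D := Module.End A L)
    ((lift_le.mpr (rank_end_le A)).trans_lt h)

theorem exists_mem_eqOn_of_finiteDimensional [IsAlgClosed K]
    (h : Cardinal.lift.{u} (Module.rank K L) < Cardinal.lift.{v} #K)
    (φ : L →ₗ[K] L) (W : Submodule K L) [FiniteDimensional K W] :
    ∃ S ∈ A, ∀ w ∈ W, S w = φ w := by
  let φ' : Module.End (Module.End A L) L :=
    { toFun := φ
      map_add' := φ.map_add
      map_smul' d m := by
        obtain ⟨c, rfl⟩ := (algebraMap_end_bijective A h).2 d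
        exact φ.map_smul c m }
  obtain ⟨s, hs⟩ := W.fg_iff_finiteDimensional.mpr ‹_›
  obtain ⟨r, hr⟩ := jacobson_density φ' s
  exact ⟨r, r.2, fun w hw ↦ LinearMap.eqOn_span (f := (r : Module.End K L)) (g := φ)
    (fun m hm ↦ (hr m hm).symm) (hs ▸ hw)⟩

theorem exists_mem_leftInverseOn [IsAlgClosed K]
    (h : Cardinal.lift.{u} (Module.rank K L) < Cardinal.lift.{v} #K)
    {X : Submodule K L} [FiniteDimensional K X] {D : Module.End K L}
    (hD : Disjoint X (LinearMap.ker D)) : ∃ S ∈ A, ∀ z ∈ X, S (D z) = z := by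
  obtain ⟨ψ, hψ⟩ := LinearMap.exists_leftInverse_of_injective (D ∘ₗ X.subtype) <| by
    rwa [LinearMap.ker_comp, ← Submodule.disjoint_iff_comap_eq_bot]
  obtain ⟨S, hSA, hS⟩ := A.exists_mem_eqOn_of_finiteDimensional h (X.subtype ∘ₗ ψ) (X.map D)
  exact ⟨S, hSA, fun z hz ↦ (hS _ ⟨z, hz, rfl⟩).trans congr(X.subtype ($hψ ⟨z, hz⟩))⟩

end Subalgebra

theorem Submodule.exists_fixed_sub_mem_of_completelyReducible {R V ι : Type*} [Ring R]
    [AddCommGroup V] [Module R V] (σ : ι → V →ₗ[R] V) {U N : Submodule R V} (hNU : N ≤ U)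
    (hN : ∀ i, ∀ S ∈ N, σ i S ∈ N)
    (hU : ∀ p : Submodule R V, p ≤ U → (∀ i, ∀ S ∈ p, σ i S ∈ p) →
      ∃ q : Submodule R V, q ≤ U ∧ (∀ i, ∀ S ∈ q, σ i S ∈ q) ∧ p ⊓ q = ⊥ ∧ p ⊔ q = U)
    {S : V} (hS : S ∈ U) (hσS : ∀ i, σ i S - S ∈ N) :
    ∃ S' ∈ U, S' - S ∈ N ∧ ∀ i, σ i S' = S' := by
  obtain ⟨Q, hQU, hQ, hNQ, hNQU⟩ := hU N hNU hN
  obtain ⟨k, hk, S', hS', rfl⟩ := Submodule.mem_sup.mp (hNQU ▸ hS)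
  refine ⟨S', hQU hS', by simpa using N.neg_mem hk, fun i ↦ sub_eq_zero.mp ?_⟩
  have hN' : σ i S' - S' ∈ N := by
    convert N.sub_mem (hσS i) (N.sub_mem (hN i k hk) hk) using 1
    simp only [map_add]; abel
  simpa [hNQ] using Submodule.mem_inf.mpr ⟨hN', Q.sub_mem (hQ i S' hS') hS'⟩

section IrreducibleSubrepresentation

variable {K G L : Type*} [Field K] [Group G] [AddCommGroup L] [Module K L]
  {ρ : Representation K G L} {X : Submodule K L}

theorem le_of_mem_of_invariant
    (hXirr : ∀ p : Submodule K L, p ≤ X → (∀ g : G, ∀ x ∈ p, ρ g x ∈ p) → p = ⊥ ∨ p = X)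
    (hXinv : ∀ g : G, ∀ x ∈ X, ρ g x ∈ X)
    {q : Submodule K L} (hq : ∀ g : G, ∀ y ∈ q, ρ g y ∈ q)
    {f : L} (hfX : f ∈ X) (hfq : f ∈ q) (hf0 : f ≠ 0) : X ≤ q := by
  rcases hXirr (X ⊓ q) inf_le_left fun g y hy ↦ ⟨hXinv g y hy.1, hq g y hy.2⟩ with h | h
  · exact absurd (by simpa [h] using Submodule.mem_inf.mpr ⟨hfX, hfq⟩) hf0
  · exact inf_eq_left.mp h

theorem disjoint_of_notMem_of_invariant
    (hXirr : ∀ p : Submodule K L, p ≤ X → (∀ g : G, ∀ x ∈ p, ρ g x ∈ p) → p = ⊥ ∨ p = X)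
    (hXinv : ∀ g : G, ∀ x ∈ X, ρ g x ∈ X)
    {q : Submodule K L} (hq : ∀ g : G, ∀ y ∈ q, ρ g y ∈ q)
    {f : L} (hfX : f ∈ X) (hfq : f ∉ q) : Disjoint X q := by
  rcases hXirr (X ⊓ q) inf_le_left fun g y hy ↦ ⟨hXinv g y hy.1, hq g y hy.2⟩ with h | h
  · exact disjoint_iff.mpr h
  · exact absurd (inf_eq_left.mp h hfX) hfq

theorem finiteDimensional_of_locallyFinite
    (hXirr : ∀ p : Submodule K L, p ≤ X → (∀ g : G, ∀ x ∈ p, ρ g x ∈ p) → p = ⊥ ∨ p = X)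
    (hXinv : ∀ g : G, ∀ x ∈ X, ρ g x ∈ X)
    (hlocfin : ∀ v : L, ∃ Y : Submodule K L,
      (∀ g : G, ∀ y ∈ Y, ρ g y ∈ Y) ∧ FiniteDimensional K Y ∧ v ∈ Y)
    {f : L} (hfX : f ∈ X) (hf0 : f ≠ 0) : FiniteDimensional K X := by
  obtain ⟨Y, hYinv, hYfin, hfY⟩ := hlocfin f
  exact Submodule.finiteDimensional_of_le (le_of_mem_of_invariant hXirr hXinv hYinv hfX hfY hf0)

end IrreducibleSubrepresentation

section conjEnd

variable {G L : Type*} [Group G] [AddCommGroup L] [Module ℂ L] (ρ : Representation ℂ G L)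

theorem conjEnd_apply (g : G) (T : Module.End ℂ L) (x : L) :
    conjEnd ρ g T x = ρ g (T (ρ g⁻¹ x)) := rfl

theorem conjEnd_one (g : G) : conjEnd ρ g 1 = 1 := by
  ext x
  simp [conjEnd_apply, ← Module.End.mul_apply, ← map_mul]

variable {ρ}

theorem apply_rho_of_conjEnd_eq {g : G} {T : Module.End ℂ L} (hT : conjEnd ρ g T = T) (x : L) :
    T (ρ g x) = ρ g (T x) := by
  conv_lhs => rw [← hT]
  rw [conjEnd_apply, Representation.inv_self_apply]

theorem exists_fixed_mem_of_leftInverseOn {A : Subalgebra ℂ (Module.End ℂ L)}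
    (hAG : ∀ g : G, ∀ T ∈ A, conjEnd ρ g T ∈ A)
    (hAcompred : ∀ p : Submodule ℂ (Module.End ℂ L),
      p ≤ Subalgebra.toSubmodule A → (∀ g : G, ∀ S ∈ p, conjEnd ρ g S ∈ p) →
      ∃ q : Submodule ℂ (Module.End ℂ L), q ≤ Subalgebra.toSubmodule A ∧
        (∀ g : G, ∀ S ∈ q, conjEnd ρ g S ∈ q) ∧
        p ⊓ q = ⊥ ∧ p ⊔ q = Subalgebra.toSubmodule A)
    {X : Submodule ℂ L} (hXinv : ∀ g : G, ∀ x ∈ X, ρ g x ∈ X)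
    {D : Module.End ℂ L} (hD : ∀ g, conjEnd ρ g D = D)
    {S : Module.End ℂ L} (hSA : S ∈ A) (hS : ∀ z ∈ X, S (D z) = z) :
    ∃ S' ∈ A, (∀ g, conjEnd ρ g S' = S') ∧ ∀ z ∈ X, S' (D z) = z := by
  -- every conjugate of `S` is again a left inverse of `D` on `X`, so it agrees with `S` modulo
  -- the `G`-stable subspace `N` of operators in `A` vanishing on `D X`
  let N := Subalgebra.toSubmodule A ⊓ LinearMap.ker (LinearMap.lcomp ℂ L (D ∘ₗ X.subtype))
  have hN (T) : T ∈ N ↔ T ∈ A ∧ ∀ z ∈ X, T (D z) = 0 := by simp [N, LinearMap.ext_iff]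
  have hconj (g : G) {T} (hT : ∀ z ∈ X, T (D z) = 0) : ∀ z ∈ X, conjEnd ρ g T (D z) = 0 :=
    fun z hz ↦ by
      rw [conjEnd_apply, ← apply_rho_of_conjEnd_eq (hD g⁻¹), hT _ (hXinv _ z hz), map_zero]
  have hSconj (g : G) : ∀ z ∈ X, (conjEnd ρ g S - S) (D z) = 0 := fun z hz ↦ by
    rw [LinearMap.sub_apply, conjEnd_apply, ← apply_rho_of_conjEnd_eq (hD g⁻¹),
      hS _ (hXinv _ z hz), hS z hz, ← Module.End.mul_apply, ← map_mul, mul_inv_cancel, map_one,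
      Module.End.one_apply, sub_self]
  obtain ⟨S', hS'A, hS'S, hS'fix⟩ := Submodule.exists_fixed_sub_mem_of_completelyReducible
    (conjEnd ρ) (U := Subalgebra.toSubmodule A) inf_le_left
    (fun g T hT ↦ (hN _).mpr ⟨hAG g T ((hN T).mp hT).1, hconj g ((hN T).mp hT).2⟩)
    hAcompred hSA fun g ↦ (hN _).mpr ⟨A.sub_mem (hAG g S hSA) hSA, hSconj g⟩
  refine ⟨S', hS'A, hS'fix, fun z hz ↦ ?_⟩
  simpa [sub_eq_zero, hS z hz] using ((hN _).mp hS'S).2 z hz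

end conjEnd

theorem Module.lift_rank_lt_lift_mk_complex {L : Type v} [AddCommGroup L] [Module ℂ L]
    (hcount : ∃ s : Set L, s.Countable ∧ Submodule.span ℂ s = ⊤) :
    Cardinal.lift.{0} (Module.rank ℂ L) < Cardinal.lift.{v} #ℂ := by
  obtain ⟨s, hs, hspan⟩ := hcount
  have : Module.rank ℂ L ≤ ℵ₀ := by
    rw [← rank_top, ← hspan]
    exact (rank_span_le s).trans (mk_le_aleph0_iff.mpr hs)
  simpa [Cardinal.mk_complex] using this.trans_lt aleph0_lt_continuum

theorem orbit_is_irreducible_module_general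
    {G L : Type*} [Group G] [AddCommGroup L] [Module ℂ L]
    (ρ : Representation ℂ G L)
    -- `L` has countable dimension
    (hcount : ∃ s : Set L, s.Countable ∧ Submodule.span ℂ s = ⊤)
    -- the `G`-action on `L` is locally finite
    (hlocfin : ∀ v : L, ∃ Y : Submodule ℂ L,
      (∀ g : G, ∀ y ∈ Y, ρ g y ∈ Y) ∧ FiniteDimensional ℂ Y ∧ v ∈ Y)
    (A : Subalgebra ℂ (Module.End ℂ L))
    -- `A` acts irreducibly on `L`
    (hAirr : ∀ p : Submodule ℂ L, (∀ T ∈ A, ∀ x ∈ p, T x ∈ p) → p = ⊥ ∨ p = ⊤)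
    -- `A` is invariant under the conjugation `G`-action
    (hAG : ∀ g : G, ∀ T ∈ A, conjEnd ρ g T ∈ A)
    -- the `G`-action on `A` is completely reducible
    (hAcompred : ∀ p : Submodule ℂ (Module.End ℂ L),
      p ≤ Subalgebra.toSubmodule A → (∀ g : G, ∀ S ∈ p, conjEnd ρ g S ∈ p) →
      ∃ q : Submodule ℂ (Module.End ℂ L), q ≤ Subalgebra.toSubmodule A ∧
        (∀ g : G, ∀ S ∈ q, conjEnd ρ g S ∈ q) ∧
        p ⊓ q = ⊥ ∧ p ⊔ q = Subalgebra.toSubmodule A)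
    -- `X` is a nonzero `G`-invariant subspace of `L`, irreducible as a `G`-module
    (X : Submodule ℂ L)
    (hXinv : ∀ g : G, ∀ x ∈ X, ρ g x ∈ X)
    (hXirr : ∀ p : Submodule ℂ L, p ≤ X → (∀ g : G, ∀ x ∈ p, ρ g x ∈ p) →
      p = ⊥ ∨ p = X)
    -- `f` is a nonzero element of `X`
    (f : L) (hf : f ∈ X) (hf0 : f ≠ 0) :
    -- `A^G·f` is nonzero, and the only `A^G`-invariant subspaces of `A^G·f`
    -- are `0` and `A^G·f` itself
    (∃ y ∈ {y : L | ∃ D ∈ A, (∀ g : G, conjEnd ρ g D = D) ∧ D f = y}, y ≠ 0) ∧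
    (∀ p : Submodule ℂ L,
      (p : Set L) ⊆ {y : L | ∃ D ∈ A, (∀ g : G, conjEnd ρ g D = D) ∧ D f = y} →
      (∀ D ∈ A, (∀ g : G, conjEnd ρ g D = D) → ∀ x ∈ p, D x ∈ p) →
      p = ⊥ ∨
        (p : Set L) = {y : L | ∃ D ∈ A, (∀ g : G, conjEnd ρ g D = D) ∧ D f = y}) := by
  refine ⟨⟨f, ⟨1, A.one_mem, conjEnd_one ρ, rfl⟩, hf0⟩, fun p hp hpinv ↦ ?_⟩
  refine or_iff_not_imp_left.mpr fun hp0 ↦ ?_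
  obtain ⟨_, hv, hv0⟩ := Submodule.exists_mem_ne_zero_of_ne_bot hp0
  obtain ⟨D, -, hD, rfl⟩ := hp hv
  have := nontrivial_of_ne f 0 hf0
  have := A.isSimpleModule_of_forall_invariant hAirr
  have := finiteDimensional_of_locallyFinite hXirr hXinv hlocfin hf hf0
  have hDX : Disjoint X (LinearMap.ker D) := disjoint_of_notMem_of_invariant hXirr hXinv
    (fun g y hy ↦ by rw [LinearMap.mem_ker, apply_rho_of_conjEnd_eq (hD g), hy, map_zero]) hf hv0
  obtain ⟨S₀, hS₀A, hS₀⟩ :=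
    A.exists_mem_leftInverseOn (Module.lift_rank_lt_lift_mk_complex hcount) hDX
  obtain ⟨S, hSA, hSfix, hS⟩ := exists_fixed_mem_of_leftInverseOn hAG hAcompred hXinv hD hS₀A hS₀
  have hfp : f ∈ p := hS f hf ▸ hpinv S hSA hSfix _ hv
  refine hp.antisymm ?_
  rintro _ ⟨D', hD'A, hD', rfl⟩
  exact hpinv D' hD'A hD' f hfp

/-- **Intermediate claim in the proof of Theorem 2.2, part 1.**
If `X` is an irreducible `G`-invariant subspace of `L` and `f ∈ X` is nonzero,
then `A^G·f := {D f : D ∈ A^G}` is an irreducible `A^G`-module: it is nonzero,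
and every `A^G`-invariant subspace of it is either `0` or all of `A^G·f`. -/
theorem orbit_is_irreducible_module
    {G L : Type*} [Group G] [AddCommGroup L] [Module ℂ L]
    (ρ : Representation ℂ G L)
    -- `L` has countable dimension
    (hcount : ∃ s : Set L, s.Countable ∧ Submodule.span ℂ s = ⊤)
    -- the `G`-action on `L` is locally finite
    (hlocfin : ∀ v : L, ∃ Y : Submodule ℂ L,
      (∀ g : G, ∀ y ∈ Y, ρ g y ∈ Y) ∧ FiniteDimensional ℂ Y ∧ v ∈ Y)
    -- the `G`-action on `L` is completely reducible
    (hcompred : ∀ p : Submodule ℂ L, (∀ g : G, ∀ y ∈ p, ρ g y ∈ p) →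
      ∃ q : Submodule ℂ L, (∀ g : G, ∀ y ∈ q, ρ g y ∈ q) ∧ IsCompl p q)
    (A : Subalgebra ℂ (Module.End ℂ L))
    -- `A` acts irreducibly on `L`
    (hAirr : ∀ p : Submodule ℂ L, (∀ T ∈ A, ∀ x ∈ p, T x ∈ p) → p = ⊥ ∨ p = ⊤)
    -- `A` is invariant under the conjugation `G`-action
    (hAG : ∀ g : G, ∀ T ∈ A, conjEnd ρ g T ∈ A)
    -- the `G`-action on `A` is locally finite
    (hAlocfin : ∀ T ∈ A, ∃ E : Submodule ℂ (Module.End ℂ L),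
      E ≤ Subalgebra.toSubmodule A ∧ (∀ g : G, ∀ S ∈ E, conjEnd ρ g S ∈ E) ∧
      FiniteDimensional ℂ E ∧ T ∈ E)
    -- the `G`-action on `A` is completely reducible
    (hAcompred : ∀ p : Submodule ℂ (Module.End ℂ L),
      p ≤ Subalgebra.toSubmodule A → (∀ g : G, ∀ S ∈ p, conjEnd ρ g S ∈ p) →
      ∃ q : Submodule ℂ (Module.End ℂ L), q ≤ Subalgebra.toSubmodule A ∧
        (∀ g : G, ∀ S ∈ q, conjEnd ρ g S ∈ q) ∧
        p ⊓ q = ⊥ ∧ p ⊔ q = Subalgebra.toSubmodule A)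
    -- `X` is a nonzero `G`-invariant subspace of `L`, irreducible as a `G`-module
    (X : Submodule ℂ L) (hXne : X ≠ ⊥)
    (hXinv : ∀ g : G, ∀ x ∈ X, ρ g x ∈ X)
    (hXirr : ∀ p : Submodule ℂ L, p ≤ X → (∀ g : G, ∀ x ∈ p, ρ g x ∈ p) →
      p = ⊥ ∨ p = X)
    -- `f` is a nonzero element of `X`
    (f : L) (hf : f ∈ X) (hf0 : f ≠ 0) :
    -- `A^G·f` is nonzero, and the only `A^G`-invariant subspaces of `A^G·f`
    -- are `0` and `A^G·f` itself
    (∃ y ∈ {y : L | ∃ D ∈ A, (∀ g : G, conjEnd ρ g D = D) ∧ D f = y}, y ≠ 0) ∧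
    (∀ p : Submodule ℂ L,
      (p : Set L) ⊆ {y : L | ∃ D ∈ A, (∀ g : G, conjEnd ρ g D = D) ∧ D f = y} →
      (∀ D ∈ A, (∀ g : G, conjEnd ρ g D = D) → ∀ x ∈ p, D x ∈ p) →
      p = ⊥ ∨
        (p : Set L) = {y : L | ∃ D ∈ A, (∀ g : G, conjEnd ρ g D = D) ∧ D f = y}) :=
  orbit_is_irreducible_module_general ρ hcount hlocfin A hAirr hAG hAcompred X hXinv hXirr f hf hf0
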